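/- Let g_1,…,g_m ∈ ℝ^n, let α_max > 0 and α_1,…,α_m ∈ (0, α_max], and let B be a symmetric positive definite n×n real matrix with B ⪯ bI for some b > 0 (i.e., ⟨d, B d⟩ ≤ b‖d‖² for all d). Then min_{d∈ℝ^n} max_{i∈{1,…,m}} [ ⟨g_i, d⟩/α_i + (1/2)‖d‖_B² ] ≤ (1/(b·α_max²)) · min_{d∈ℝ^n} max_{i∈{1,…,m}} [ ⟨g_i, d⟩ + (1/2)‖d‖² ]. -/

import Mathlib

/-!
If `max_i ⟪g i, d⟫ > 0`, the right-hand side at `d` is positive while the left-hand infimum is at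
most its value `0` at `d = 0`. Otherwise every `⟪g i, d⟫` is nonpositive, so dividing by
`α i ≤ αmax` only lowers it, and `B ⪯ bI` bounds the quadratic term; at the point
`(b αmax)⁻¹ • d` the left objective is then at most `1 / (b αmax²)` times the right one at `d`.
Positive definiteness (in finite dimension) makes the left objective bounded below, so that its
infimum is a genuine one.
-/

open scoped RealInnerProductSpace

/-- Maximum of a function over the (nonempty) finite index type `Fin m`. -/
noncomputable def fmax {m : ℕ} [NeZero m] (f : Fin m → ℝ) : ℝ :=
  Finset.univ.sup' Finset.univ_nonempty f

section Fmax

variable {m : ℕ} [NeZero m]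

lemma fmax_le {f : Fin m → ℝ} {a : ℝ} (h : ∀ i, f i ≤ a) : fmax f ≤ a :=
  Finset.sup'_le _ _ fun i _ => h i

lemma le_fmax (f : Fin m → ℝ) (i : Fin m) : f i ≤ fmax f :=
  Finset.le_sup' f (Finset.mem_univ i)

lemma fmax_const (a : ℝ) : fmax (fun _ : Fin m => a) = a :=
  Finset.sup'_const _ a

lemma fmax_const_mul (f : Fin m → ℝ) {c : ℝ} (hc : 0 ≤ c) :
    fmax (fun i => c * f i) = c * fmax f :=
  (Finset.mul₀_sup' hc f _ _).symm

lemma fmax_div_le_of_nonpos {x α : Fin m → ℝ} {αmax : ℝ} (hα : ∀ i, α i ∈ Set.Ioc 0 αmax)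
    (hx : fmax x ≤ 0) : fmax (fun i => x i / α i) ≤ fmax x / αmax := by
  refine fmax_le fun i => ?_
  obtain ⟨hαi, hαi_le⟩ := hα i
  have hxi : x i ≤ 0 := (le_fmax x i).trans hx
  calc x i / α i ≤ x i / αmax := by
        simpa only [neg_div, neg_le_neg_iff] using
          div_le_div_of_nonneg_left (neg_nonneg.2 hxi) hαi hαi_le
    _ ≤ fmax x / αmax := div_le_div_of_nonneg_right (le_fmax x i) (hαi.trans_le hαi_le).le

end Fmax

section InnerProductSpace

variable {E : Type*} [NormedAddCommGroup E] [InnerProductSpace ℝ E]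

lemma exists_pos_mul_sq_norm_le_inner_map_self [FiniteDimensional ℝ E] (B : E →ₗ[ℝ] E)
    (hB : ∀ x, x ≠ 0 → 0 < ⟪x, B x⟫) : ∃ μ > 0, ∀ d, μ * ‖d‖ ^ 2 ≤ ⟪d, B d⟫ := by
  rcases subsingleton_or_nontrivial E with _ | _
  · exact ⟨1, one_pos, fun d => by simp [Subsingleton.elim d 0]⟩
  have hcont : Continuous fun x : E => ⟪x, B x⟫ :=
    continuous_id.inner B.continuous_of_finiteDimensional
  obtain ⟨u, hu, hmin⟩ := (isCompact_sphere (0 : E) 1).exists_isMinOn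
    (NormedSpace.sphere_nonempty.2 zero_le_one) hcont.continuousOn
  refine ⟨⟪u, B u⟫, hB u (ne_zero_of_mem_unit_sphere ⟨u, hu⟩), fun d => ?_⟩
  rcases eq_or_ne d 0 with rfl | hd
  · simp
  have hmin_d : ⟪u, B u⟫ ≤ ⟪‖d‖⁻¹ • d, B (‖d‖⁻¹ • d)⟫ :=
    hmin (show ‖d‖⁻¹ • d ∈ Metric.sphere (0 : E) 1 by simp [norm_smul, hd])
  rw [map_smul, real_inner_smul_left, real_inner_smul_right] at hmin_d
  calc ⟪u, B u⟫ * ‖d‖ ^ 2 ≤ ‖d‖⁻¹ * (‖d‖⁻¹ * ⟪d, B d⟫) * ‖d‖ ^ 2 := by gcongr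
    _ = ⟪d, B d⟫ := by field_simp

lemma bddBelow_range_inner_add_half_inner_map_self {B : E →ₗ[ℝ] E} {μ : ℝ} (hμ : 0 < μ)
    (hB : ∀ d, μ * ‖d‖ ^ 2 ≤ ⟪d, B d⟫) (v : E) :
    BddBelow (Set.range fun d => ⟪v, d⟫ + ⟪d, B d⟫ / 2) := by
  refine ⟨-(‖v‖ ^ 2 / (2 * μ)), Set.forall_mem_range.2 fun d => ?_⟩
  have hinner : -(‖v‖ * ‖d‖) ≤ ⟪v, d⟫ := neg_le_of_abs_le (abs_real_inner_le_norm v d)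
  have hsq : 0 ≤ (μ * ‖d‖ - ‖v‖) ^ 2 / (2 * μ) := by positivity
  have hexpand : (μ * ‖d‖ - ‖v‖) ^ 2 / (2 * μ) =
      μ * ‖d‖ ^ 2 / 2 - ‖v‖ * ‖d‖ + ‖v‖ ^ 2 / (2 * μ) := by
    field_simp; ring
  linarith [hB d]

lemma fmax_inner_smul_div_add_le {m : ℕ} [NeZero m] {g : Fin m → E} {α : Fin m → ℝ}
    {αmax b : ℝ} (hαmax : 0 < αmax) (hα : ∀ i, α i ∈ Set.Ioc 0 αmax) (hb : 0 < b)
    {B : E →ₗ[ℝ] E} (hBb : ∀ d, ⟪d, B d⟫ ≤ b * ‖d‖ ^ 2) {d : E}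
    (hd : fmax (fun i => ⟪g i, d⟫) ≤ 0) :
    (fmax fun i => ⟪g i, (b * αmax)⁻¹ • d⟫ / α i) +
        ⟪(b * αmax)⁻¹ • d, B ((b * αmax)⁻¹ • d)⟫ / 2 ≤
      1 / (b * αmax ^ 2) * ((fmax fun i => ⟪g i, d⟫) + ‖d‖ ^ 2 / 2) := by
  set c := (b * αmax)⁻¹
  have hc : 0 < c := by positivity
  have hlin : (fmax fun i => ⟪g i, c • d⟫ / α i) ≤ c * (fmax (fun i => ⟪g i, d⟫) / αmax) := by
    simp_rw [real_inner_smul_right, mul_div_assoc]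
    rw [fmax_const_mul _ hc.le]
    exact mul_le_mul_of_nonneg_left (fmax_div_le_of_nonpos hα hd) hc.le
  have hquad : ⟪c • d, B (c • d)⟫ ≤ c ^ 2 * (b * ‖d‖ ^ 2) := by
    rw [map_smul, real_inner_smul_left, real_inner_smul_right, ← mul_assoc, ← sq]
    exact mul_le_mul_of_nonneg_left (hBb d) (sq_nonneg c)
  calc _ ≤ c * (fmax (fun i => ⟪g i, d⟫) / αmax) + c ^ 2 * (b * ‖d‖ ^ 2) / 2 := by linarith
    _ = _ := by simp only [c]; field_simp

end InnerProductSpace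

theorem stmt8_general {n m : ℕ} [NeZero m] (g : Fin m → EuclideanSpace ℝ (Fin n))
    (αmax : ℝ) (hαmax : 0 < αmax) (α : Fin m → ℝ) (hα : ∀ i, α i ∈ Set.Ioc 0 αmax)
    (B : EuclideanSpace ℝ (Fin n) →ₗ[ℝ] EuclideanSpace ℝ (Fin n))
    (hposdef : ∀ x : EuclideanSpace ℝ (Fin n), x ≠ 0 → 0 < ⟪x, B x⟫)
    (b : ℝ) (hb : 0 < b)
    (hBb : ∀ d : EuclideanSpace ℝ (Fin n), ⟪d, B d⟫ ≤ b * ‖d‖ ^ 2) :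
    (⨅ d : EuclideanSpace ℝ (Fin n),
        ((fmax fun i => ⟪g i, d⟫ / α i) + ⟪d, B d⟫ / 2)) ≤
      (1 / (b * αmax ^ 2)) *
        ⨅ d : EuclideanSpace ℝ (Fin n), ((fmax fun i => ⟪g i, d⟫) + ‖d‖ ^ 2 / 2) := by
  obtain ⟨μ, hμ, hcoer⟩ := exists_pos_mul_sq_norm_le_inner_map_self B hposdef
  have hbdd : BddBelow (Set.range fun d => (fmax fun i => ⟪g i, d⟫ / α i) + ⟪d, B d⟫ / 2) :=
    (bddBelow_range_inner_add_half_inner_map_self hμ hcoer ((α 0)⁻¹ • g 0)).range_mono _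
      fun d => by
        simpa only [real_inner_smul_left, inv_mul_eq_div, add_le_add_iff_right] using
          le_fmax (fun i => ⟪g i, d⟫ / α i) 0
  rw [Real.mul_iInf_of_nonneg (by positivity)]
  refine le_ciInf fun d => ?_
  by_cases hd : fmax (fun i => ⟪g i, d⟫) ≤ 0
  · exact (ciInf_le hbdd _).trans (fmax_inner_smul_div_add_le hαmax hα hb hBb hd)
  · calc _ ≤ (fmax fun i => ⟪g i, 0⟫ / α i) + ⟪0, B 0⟫ / 2 := ciInf_le hbdd 0
      _ = 0 := by simp [fmax_const]
      _ ≤ _ := mul_nonneg (by positivity) (by linarith [not_le.1 hd, sq_nonneg ‖d‖])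

/-- With `0 < α_i ≤ α_max` and `B` symmetric positive definite with
`B ⪯ bI`, the optimal value of the scaled variable-metric subproblem is at most
`1/(b α_max²)` times that of the steepest-descent subproblem. -/
theorem stmt8 {n m : ℕ} [NeZero m] (g : Fin m → EuclideanSpace ℝ (Fin n))
    (αmax : ℝ) (hαmax : 0 < αmax) (α : Fin m → ℝ) (hα : ∀ i, α i ∈ Set.Ioc 0 αmax)
    (B : EuclideanSpace ℝ (Fin n) →ₗ[ℝ] EuclideanSpace ℝ (Fin n))
    (hsym : ∀ x y : EuclideanSpace ℝ (Fin n), ⟪B x, y⟫ = ⟪x, B y⟫)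
    (hposdef : ∀ x : EuclideanSpace ℝ (Fin n), x ≠ 0 → 0 < ⟪x, B x⟫)
    (b : ℝ) (hb : 0 < b)
    (hBb : ∀ d : EuclideanSpace ℝ (Fin n), ⟪d, B d⟫ ≤ b * ‖d‖ ^ 2) :
    (⨅ d : EuclideanSpace ℝ (Fin n),
        ((fmax fun i => ⟪g i, d⟫ / α i) + ⟪d, B d⟫ / 2)) ≤
      (1 / (b * αmax ^ 2)) *
        ⨅ d : EuclideanSpace ℝ (Fin n), ((fmax fun i => ⟪g i, d⟫) + ‖d‖ ^ 2 / 2) :=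
  stmt8_general g αmax hαmax α hα B hposdef b hb hBb
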